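/- There exists a constant C > 0 such that for all distinct x, y ∈ [0,1], |f_1(x) − f_1(y)| ≤ C·|x − y|·log(e/|x − y|); i.e. f_1 has modulus of continuity t·log(1/t). In particular f_1 is α-Hölder for every α ∈ [0,1). -/

import Mathlib

open Set MeasureTheory

/-- The piecewise-affine `b`-branched sawtooth map on `[0,1]`:
`g1 b x = b*x - k` on `[k/b,(k+1)/b]` for `k ∈ {0,…,b-1}` even, and
`g1 b x = (k+1) - b*x` there for `k` odd.  (For `x ∈ [0,1]`, the index
`k = min ⌊b*x⌋ (b-1)` is exactly the branch index; at common endpoints of two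
branches both formulas agree, so this agrees with the piecewise definition.) -/
noncomputable def g1 (b : ℕ) (x : ℝ) : ℝ :=
  let k : ℤ := min ⌊(b : ℝ) * x⌋ ((b : ℤ) - 1)
  if Even k then (b : ℝ) * x - (k : ℝ) else ((k : ℝ) + 1) - (b : ℝ) * x

/-- For `x ∈ I_n = (2^{-n}, 2^{-n+1}]` (with `n ≥ 1`), `nIdx x = n`. -/
noncomputable def nIdx (x : ℝ) : ℕ := (⌊Real.logb 2 x⁻¹⌋ + 1).toNat

/-- The map `f_1 : [0,1] → [0,1]`: on each interval `I_n = (2^{-n}, 2^{-n+1}]` it is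
`A_n⁻¹ ∘ g_{1,2n+1} ∘ A_n`, where `A_n x = 2^n x - 1`, and `f_1 0 = 0`. -/
noncomputable def f1 (x : ℝ) : ℝ :=
  if x ≤ 0 then 0
  else (g1 (2 * nIdx x + 1) ((2 : ℝ) ^ nIdx x * x - 1) + 1) / (2 : ℝ) ^ nIdx x

/-- `round` minimizes distance to integers. -/
lemma round_min (y : ℝ) (m : ℤ) : |y - round y| ≤ |y - m| := by
  rcases eq_or_ne m (round y) with h | h
  · rw [h]
  · have h0 : ((round y - m : ℤ) : ℝ) ≠ 0 := by
      exact_mod_cast sub_ne_zero.2 (Ne.symm h)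
    have h1 : (1 : ℝ) ≤ |((round y : ℤ) : ℝ) - (m : ℝ)| := by
      have := Int.one_le_abs (sub_ne_zero.2 (fun hc => h hc.symm))
      calc (1:ℝ) ≤ |((round y - m : ℤ) : ℝ)| := by exact_mod_cast this
        _ = |((round y : ℤ) : ℝ) - (m : ℝ)| := by push_cast; ring_nf
    have h2 : |y - round y| ≤ 1 / 2 := abs_sub_round y
    have h3 : |((round y : ℤ) : ℝ) - m| ≤ |(round y : ℝ) - y| + |y - m| := by
      calc |((round y : ℤ) : ℝ) - m| = |((round y : ℝ) - y) + (y - m)| := by ring_nf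
        _ ≤ _ := abs_add_le _ _
    rw [abs_sub_comm] at h2
    have h4 : |y - (round y : ℝ)| = |(round y : ℝ) - y| := abs_sub_comm _ _
    linarith

/-- Triangle wave: distance to nearest even integer. -/
noncomputable def Tw (s : ℝ) : ℝ := |s - 2 * round (s / 2)|

lemma Tw_min (s : ℝ) (m : ℤ) : Tw s ≤ |s - 2 * m| := by
  have h := round_min (s / 2) m
  have h1 : |s - 2 * (round (s/2) : ℝ)| = 2 * |s/2 - round (s/2)| := by
    rw [show s - 2*(round (s/2):ℝ) = 2*(s/2 - round (s/2)) by ring, abs_mul, abs_two]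
  have h2 : |s - 2 * (m:ℝ)| = 2 * |s/2 - m| := by
    rw [show s - 2*(m:ℝ) = 2*(s/2 - m) by ring, abs_mul, abs_two]
  rw [Tw, h1, h2]; linarith

lemma Tw_lip (s t : ℝ) : |Tw s - Tw t| ≤ |s - t| := by
  rw [abs_sub_le_iff]
  constructor
  · calc Tw s - Tw t ≤ |s - 2 * round (t/2)| - Tw t := by
          linarith [Tw_min s (round (t/2))]
      _ ≤ |s - t| := by
          have : |s - 2 * round (t/2)| ≤ |s - t| + |t - 2 * round (t/2)| := by
            calc |s - 2 * round (t/2)| = |(s - t) + (t - 2 * round (t/2))| := by ring_nf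
              _ ≤ _ := abs_add_le _ _
          rw [Tw]; linarith
  · calc Tw t - Tw s ≤ |t - 2 * round (s/2)| - Tw s := by
          linarith [Tw_min t (round (s/2))]
      _ ≤ |s - t| := by
          have : |t - 2 * round (s/2)| ≤ |t - s| + |s - 2 * round (s/2)| := by
            calc |t - 2 * round (s/2)| = |(t - s) + (s - 2 * round (s/2))| := by ring_nf
              _ ≤ _ := abs_add_le _ _
          rw [Tw, abs_sub_comm s t]; linarith

lemma Tw_nonneg (s : ℝ) : 0 ≤ Tw s := abs_nonneg _

lemma Tw_le_one (s : ℝ) : Tw s ≤ 1 := by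
  have h := abs_sub_round (s/2)
  have h1 : Tw s = 2 * |s/2 - round (s/2)| := by
    rw [Tw, show s - 2*(round (s/2):ℝ) = 2*(s/2 - round (s/2)) by ring, abs_mul, abs_two]
  rw [h1]; linarith

lemma g1_eq_Tw {b : ℕ} (hb : 1 ≤ b) {x : ℝ} (hx0 : 0 ≤ x) (hx1 : x ≤ 1) :
    g1 b x = Tw ((b : ℝ) * x) := by
  set s : ℝ := (b : ℝ) * x with hs
  have hs0 : 0 ≤ s := mul_nonneg (by positivity) hx0
  have hsb : s ≤ (b : ℝ) := by
    calc s ≤ (b:ℝ) * 1 := by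
          apply mul_le_mul_of_nonneg_left hx1 (by positivity)
      _ = b := mul_one _
  set k : ℤ := min ⌊s⌋ ((b : ℤ) - 1) with hk
  have hk1 : (k : ℝ) ≤ s := by
    have : (k : ℝ) ≤ (⌊s⌋ : ℝ) := by exact_mod_cast min_le_left _ _
    linarith [Int.floor_le s]
  have hk2 : s ≤ (k : ℝ) + 1 := by
    rcases le_or_gt ⌊s⌋ ((b:ℤ) - 1) with h | h
    · have : k = ⌊s⌋ := min_eq_left h
      rw [this]; linarith [Int.lt_floor_add_one s]
    · have hkb : k = (b:ℤ) - 1 := min_eq_right h.le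
      rw [hkb]; push_cast; linarith
  have hgoal : g1 b x = if Even k then s - (k:ℝ) else ((k:ℝ) + 1) - s := rfl
  rw [hgoal]
  split_ifs with hE
  · obtain ⟨j, hj⟩ := hE
    have hjr : (k : ℝ) = 2 * j := by rw [hj]; push_cast; ring
    have hle : Tw s ≤ s - (k:ℝ) := by
      have h1 := Tw_min s j
      have h2 : |s - 2*(j:ℝ)| = s - 2*(j:ℝ) := abs_of_nonneg (by rw [hjr] at hk1; linarith)
      rw [hjr]; linarith
    have hge : s - (k:ℝ) ≤ Tw s := by
      set r := round (s/2) with hr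
      rcases le_or_gt r j with h | h
      · have hrr : (r:ℝ) ≤ (j:ℝ) := by exact_mod_cast h
        have : s - 2*(r:ℝ) ≤ |s - 2*r| := le_abs_self _
        rw [Tw]; push_cast at *; rw [hjr]; linarith
      · have hrr : (j:ℝ) + 1 ≤ (r:ℝ) := by exact_mod_cast h
        have : -(s - 2*(r:ℝ)) ≤ |s - 2*r| := neg_le_abs _
        rw [Tw]; rw [hjr] at hk2 ⊢; linarith
    linarith
  · have hO : Odd k := Int.not_even_iff_odd.mp hE
    obtain ⟨j, hj⟩ := hO
    have hjr : (k : ℝ) = 2 * j + 1 := by rw [hj]; push_cast; ring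
    have hle : Tw s ≤ (k:ℝ) + 1 - s := by
      have h1 := Tw_min s (j+1)
      have h2 : |s - 2*((j:ℝ)+1)| = 2*(j:ℝ)+2 - s := by
        rw [abs_of_nonpos (by rw [hjr] at hk2; linarith)]; ring
      push_cast at h1
      rw [hjr]; linarith
    have hge : (k:ℝ) + 1 - s ≤ Tw s := by
      set r := round (s/2) with hr
      rcases le_or_gt r j with h | h
      · have hrr : (r:ℝ) ≤ (j:ℝ) := by exact_mod_cast h
        have : s - 2*(r:ℝ) ≤ |s - 2*r| := le_abs_self _
        rw [Tw]; rw [hjr] at hk1 ⊢; linarith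
      · have hrr : (j:ℝ) + 1 ≤ (r:ℝ) := by exact_mod_cast h
        have : -(s - 2*(r:ℝ)) ≤ |s - 2*r| := neg_le_abs _
        rw [Tw, hjr]; linarith
    linarith

lemma nIdx_spec {x : ℝ} (hx0 : 0 < x) (hx1 : x ≤ 1) :
    1 ≤ nIdx x ∧ 1 < (2:ℝ) ^ nIdx x * x ∧ (2:ℝ) ^ nIdx x * x ≤ 2 := by
  have hb : (1:ℝ) < 2 := one_lt_two
  have hxi : (1:ℝ) ≤ x⁻¹ := one_le_inv_iff₀.mpr ⟨hx0, hx1⟩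
  have hxi0 : (0:ℝ) < x⁻¹ := by positivity
  set r := Real.logb 2 x⁻¹ with hr
  have hr0 : 0 ≤ r := Real.logb_nonneg hb hxi
  have hf0 : 0 ≤ ⌊r⌋ := Int.le_floor.mpr (by exact_mod_cast hr0)
  have hn : (nIdx x : ℤ) = ⌊r⌋ + 1 := by
    rw [nIdx, ← hr, Int.toNat_of_nonneg (by omega)]
  have hn1 : 1 ≤ nIdx x := by omega
  refine ⟨hn1, ?_, ?_⟩
  · have h1 : r < ((nIdx x : ℤ) : ℝ) := by
      rw [hn]; push_cast; linarith [Int.lt_floor_add_one r]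
    have h2 : x⁻¹ < (2:ℝ) ^ ((nIdx x : ℝ)) := by
      have := (Real.logb_lt_iff_lt_rpow hb hxi0).mp (by exact_mod_cast h1)
      exact this
    rw [Real.rpow_natCast] at h2
    have := (inv_lt_iff_one_lt_mul₀ hx0).mp h2
    linarith
  · have h1 : ((nIdx x : ℝ) - 1) ≤ r := by
      have : ((⌊r⌋ : ℝ)) ≤ r := Int.floor_le r
      have h2 : ((nIdx x : ℝ)) = (⌊r⌋ : ℝ) + 1 := by exact_mod_cast hn
      linarith
    have h2 : (2:ℝ) ^ ((nIdx x : ℝ) - 1) ≤ x⁻¹ :=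
      (Real.le_logb_iff_rpow_le hb hxi0).mp h1
    have h3 : (2:ℝ) ^ ((nIdx x : ℝ) - 1) = (2:ℝ) ^ nIdx x / 2 := by
      rw [Real.rpow_sub (by norm_num), Real.rpow_one, Real.rpow_natCast]
    rw [h3] at h2
    have h4 : (2:ℝ) ^ nIdx x / 2 * x ≤ 1 := by
      calc (2:ℝ) ^ nIdx x / 2 * x ≤ x⁻¹ * x := by
            apply mul_le_mul_of_nonneg_right h2 hx0.le
        _ = 1 := inv_mul_cancel₀ hx0.ne'
    linarith

lemma Tw_zero : Tw 0 = 0 := by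
  rw [Tw]; norm_num

lemma Tw_odd (n : ℕ) : Tw ((2*n+1 : ℕ) : ℝ) = 1 := by
  have h2 : ((2*n+1 : ℕ) : ℝ) / 2 = 1/2 + (n : ℤ) := by push_cast; ring
  have h3 : round (((2*n+1 : ℕ) : ℝ) / 2) = round ((1:ℝ)/2) + (n:ℤ) := by
    rw [h2, round_add_intCast]
  have h4 : round ((1:ℝ)/2) = 1 := by
    rw [round_eq]; norm_num
  rw [Tw, h3, h4]; push_cast; rw [show (2*(n:ℝ)+1) - 2*(1+(n:ℝ)) = -1 by ring]
  norm_num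

lemma f1_eq {x : ℝ} (hx0 : 0 < x) :
    f1 x = (g1 (2 * nIdx x + 1) ((2:ℝ) ^ nIdx x * x - 1) + 1) / (2:ℝ) ^ nIdx x := by
  rw [f1, if_neg (not_le.mpr hx0)]

lemma f1_est {x : ℝ} (hx0 : 0 < x) (hx1 : x ≤ 1) :
    |f1 x - 1/(2:ℝ)^(nIdx x)| ≤ (2*(nIdx x)+1 : ℕ) * (x - 1/(2:ℝ)^(nIdx x)) ∧
    |f1 x - 2/(2:ℝ)^(nIdx x)| ≤ (2*(nIdx x)+1 : ℕ) * (2/(2:ℝ)^(nIdx x) - x) ∧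
    1/(2:ℝ)^(nIdx x) ≤ f1 x ∧ f1 x ≤ 2/(2:ℝ)^(nIdx x) := by
  obtain ⟨hn1, hu1, hu2⟩ := nIdx_spec hx0 hx1
  set n := nIdx x with hn
  set P : ℝ := (2:ℝ)^n with hP
  have hP0 : (0:ℝ) < P := by positivity
  set b : ℕ := 2*n+1 with hb
  set u : ℝ := P*x - 1 with hu
  have hu0 : 0 ≤ u := by simp only [hu]; linarith
  have hule : u ≤ 1 := by simp only [hu]; linarith
  have hgT : g1 b u = Tw ((b:ℝ)*u) := g1_eq_Tw (by omega) hu0 hule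
  have hf : f1 x = (g1 b u + 1)/P := f1_eq hx0
  have hA : |g1 b u - 0| ≤ (b:ℝ) * u := by
    have := Tw_lip ((b:ℝ)*u) 0
    rw [hgT, ← Tw_zero]
    calc |Tw ((b:ℝ)*u) - Tw 0| ≤ |(b:ℝ)*u - 0| := Tw_lip _ _
      _ = (b:ℝ)*u := by rw [sub_zero, abs_of_nonneg (by positivity)]
  have hB : |g1 b u - 1| ≤ (b:ℝ) * (1 - u) := by
    have h1 : Tw ((b:ℝ)*1) = 1 := by
      rw [mul_one, hb]; exact_mod_cast Tw_odd n
    rw [hgT]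
    calc |Tw ((b:ℝ)*u) - 1| = |Tw ((b:ℝ)*u) - Tw ((b:ℝ)*1)| := by rw [h1]
      _ ≤ |(b:ℝ)*u - (b:ℝ)*1| := Tw_lip _ _
      _ = (b:ℝ)*(1-u) := by
          rw [show (b:ℝ)*u - (b:ℝ)*1 = -((b:ℝ)*(1-u)) by ring, abs_neg,
            abs_of_nonneg (mul_nonneg (by positivity) (by linarith))]
  have hg0 : 0 ≤ g1 b u := by rw [hgT]; exact Tw_nonneg _
  have hg1 : g1 b u ≤ 1 := by rw [hgT]; exact Tw_le_one _
  have key1 : f1 x - 1/P = g1 b u / P := by rw [hf]; field_simp; ring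
  have key2 : f1 x - 2/P = (g1 b u - 1) / P := by rw [hf]; field_simp; ring
  have huP : u / P = x - 1/P := by rw [hu]; field_simp
  have huP2 : (1 - u) / P = 2/P - x := by rw [hu]; field_simp; ring
  refine ⟨?_, ?_, ?_, ?_⟩
  · rw [key1, abs_div, abs_of_pos hP0, div_le_iff₀ hP0]
    rw [show ((b:ℝ)) * (x - 1/P) * P = (b:ℝ) * ((x - 1/P) * P) by ring]
    have : (x - 1/P) * P = u := by rw [hu]; field_simp
    rw [this]
    simpa using hA
  · rw [key2, abs_div, abs_of_pos hP0, div_le_iff₀ hP0]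
    rw [show ((b:ℝ)) * (2/P - x) * P = (b:ℝ) * ((2/P - x) * P) by ring]
    have : (2/P - x) * P = 1 - u := by rw [hu]; field_simp; ring_nf
    rw [this]
    exact hB
  · rw [hf, le_div_iff₀ hP0]
    have : 1/P * P = 1 := by field_simp
    rw [this]; linarith
  · rw [hf, div_le_div_iff₀ hP0 hP0]
    nlinarith

lemma f1_lip_same {x y : ℝ} (hy0 : 0 < y) (hyx : y ≤ x) (hx1 : x ≤ 1)
    (hnm : nIdx x = nIdx y) :
    |f1 x - f1 y| ≤ (2*(nIdx x)+1 : ℕ) * (x - y) := by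
  obtain ⟨hn1, hux1, hux2⟩ := nIdx_spec (lt_of_lt_of_le hy0 hyx) hx1
  obtain ⟨_, huy1, huy2⟩ := nIdx_spec hy0 (le_trans hyx hx1)
  rw [← hnm] at huy1 huy2
  set n := nIdx x with hn
  set P : ℝ := (2:ℝ)^n with hP
  have hP0 : (0:ℝ) < P := by positivity
  set b : ℕ := 2*n+1 with hb
  have hgx : g1 b (P*x - 1) = Tw ((b:ℝ)*(P*x-1)) := g1_eq_Tw (by omega) (by linarith) (by linarith)
  have hgy : g1 b (P*y - 1) = Tw ((b:ℝ)*(P*y-1)) := g1_eq_Tw (by omega) (by linarith) (by linarith)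
  have hfx : f1 x = (g1 b (P*x-1) + 1)/P := f1_eq (by linarith)
  have hfy : f1 y = (g1 b (P*y-1) + 1)/P := by
    have := f1_eq hy0
    rw [← hnm] at this; exact this
  rw [hfx, hfy]
  have hd : (g1 b (P*x-1) + 1)/P - (g1 b (P*y-1) + 1)/P
      = (Tw ((b:ℝ)*(P*x-1)) - Tw ((b:ℝ)*(P*y-1)))/P := by
    rw [hgx, hgy]; ring
  rw [hd, abs_div, abs_of_pos hP0, div_le_iff₀ hP0]
  calc |Tw ((b:ℝ)*(P*x-1)) - Tw ((b:ℝ)*(P*y-1))| ≤ |(b:ℝ)*(P*x-1) - (b:ℝ)*(P*y-1)| :=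
        Tw_lip _ _
    _ = (b:ℝ) * (x-y) * P := by
        rw [show (b:ℝ)*(P*x-1) - (b:ℝ)*(P*y-1) = (b:ℝ)*(x-y)*P by ring]
        exact abs_of_nonneg (mul_nonneg (mul_nonneg (by positivity) (by linarith)) hP0.le)

lemma nIdx_anti {x y : ℝ} (hy0 : 0 < y) (hyx : y ≤ x) : nIdx x ≤ nIdx y := by
  have hx0 : 0 < x := lt_of_lt_of_le hy0 hyx
  have h1 : x⁻¹ ≤ y⁻¹ := by
    apply inv_anti₀ hy0 hyx
  have h2 : Real.logb 2 x⁻¹ ≤ Real.logb 2 y⁻¹ :=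
    Real.logb_le_logb_of_le one_lt_two (by positivity) h1
  have h3 : ⌊Real.logb 2 x⁻¹⌋ ≤ ⌊Real.logb 2 y⁻¹⌋ := Int.floor_le_floor h2
  rw [nIdx, nIdx]; omega

lemma const_bound {n : ℕ} (hn : 1 ≤ n) {t : ℝ} (ht0 : 0 < t) (ht : t ≤ 2/(2:ℝ)^n) :
    (2*n+1 : ℕ) ≤ 5 * (1 - Real.log t) := by
  have hlog2 : (0.6931471803 : ℝ) < Real.log 2 := Real.log_two_gt_d9
  have h1 : Real.log t ≤ Real.log (2/(2:ℝ)^n) := Real.log_le_log ht0 ht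
  have h2 : Real.log (2/(2:ℝ)^n) = Real.log 2 - n * Real.log 2 := by
    rw [Real.log_div (by norm_num) (by positivity), Real.log_pow]
  have hn' : (1:ℝ) ≤ (n:ℝ) := by exact_mod_cast hn
  push_cast
  nlinarith [hlog2, hn']

lemma phi_mono {a b : ℝ} (ha : 0 < a) (hab : a ≤ b) (hb1 : b ≤ 1) :
    a * (1 - Real.log a) ≤ b * (1 - Real.log b) := by
  have hb0 : 0 < b := lt_of_lt_of_le ha hab
  have h1 : Real.log (b/a) ≤ b/a - 1 := Real.log_le_sub_one_of_pos (by positivity)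
  have h2 : Real.log b ≤ 0 := Real.log_nonpos hb0.le hb1
  have h3 : Real.log (b/a) = Real.log b - Real.log a := Real.log_div hb0.ne' ha.ne'
  rw [h3] at h1
  have h4 : a * (Real.log b - Real.log a) ≤ a * (b/a - 1) :=
    mul_le_mul_of_nonneg_left h1 ha.le
  have h5 : a * (b/a - 1) = b - a := by field_simp
  have h6 : (b - a) * Real.log b ≤ 0 :=
    mul_nonpos_of_nonneg_of_nonpos (by linarith) h2
  nlinarith

lemma f1_key {x y : ℝ} (hy0 : 0 < y) (hyx : y < x) (hx1 : x ≤ 1) :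
    |f1 x - f1 y| ≤ 11 * (x - y) * (1 - Real.log (x - y)) := by
  have hx0 : 0 < x := lt_trans hy0 hyx
  have hy1 : y ≤ 1 := by linarith
  set t : ℝ := x - y with htdef
  have ht0 : 0 < t := by rw [htdef]; linarith
  have ht1 : t ≤ 1 := by rw [htdef]; linarith
  have hL : 1 ≤ 1 - Real.log t := by
    have := Real.log_nonpos ht0.le ht1
    linarith
  obtain ⟨hnx1, hxl, hxu⟩ := nIdx_spec hx0 hx1
  obtain ⟨hny1, hyl, hyu⟩ := nIdx_spec hy0 hy1
  set nx := nIdx x with hnx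
  set ny := nIdx y with hny
  have hnxy : nx ≤ ny := nIdx_anti hy0 hyx.le
  set Px : ℝ := (2:ℝ)^nx with hPx
  set Py : ℝ := (2:ℝ)^ny with hPy
  clear_value Px Py
  clear_value t
  have hPx0 : (0:ℝ) < Px := by rw [hPx]; positivity
  have hPy0 : (0:ℝ) < Py := by rw [hPy]; positivity
  have hx2P : x ≤ 2/Px := by rw [le_div_iff₀ hPx0]; linarith
  have htP : t ≤ 2/Px := by linarith
  have cbx : ((2*nx+1 : ℕ) : ℝ) ≤ 5 * (1 - Real.log t) := const_bound hnx1 ht0 (by rw [← hPx]; exact htP)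
  rcases eq_or_lt_of_le hnxy with heq | hlt
  · have h := f1_lip_same hy0 hyx.le hx1 (by rw [← hnx, ← hny]; exact heq)
    have h2 : ((2*nx+1:ℕ):ℝ) * t ≤ 5*(1 - Real.log t)*t :=
      mul_le_mul_of_nonneg_right cbx ht0.le
    have h3 : 0 ≤ t * (1 - Real.log t) :=
      mul_nonneg ht0.le (by linarith)
    rw [← hnx, ← htdef] at h
    linarith
  · have h2P : 2*Px ≤ Py := by
      have h1 : (2:ℝ)^(nx+1) ≤ (2:ℝ)^ny := pow_le_pow_right₀ one_le_two hlt
      rw [pow_succ] at h1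
      rw [hPx, hPy]; linarith
    have h21 : 2/Py ≤ 1/Px := by
      rw [div_le_div_iff₀ hPy0 hPx0]; linarith
    have hyP : y ≤ 2/Py := by rw [le_div_iff₀ hPy0]; linarith
    have hxP : 1/Px < x := by rw [div_lt_iff₀ hPx0]; linarith
    have hyPl : 1/Py < y := by rw [div_lt_iff₀ hPy0]; linarith
    obtain ⟨hAx, _, _, _⟩ := f1_est hx0 hx1
    obtain ⟨_, hBy, _, _⟩ := f1_est hy0 hy1
    rw [← hnx, ← hPx] at hAx
    rw [← hny, ← hPy] at hBy
    -- term A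
    have tA : |f1 x - 1/Px| ≤ 5*(1 - Real.log t)*t := by
      have h1 : x - 1/Px ≤ t := by rw [htdef]; linarith
      have h2 : ((2*nx+1:ℕ):ℝ)*(x-1/Px) ≤ ((2*nx+1:ℕ):ℝ)*t :=
        mul_le_mul_of_nonneg_left h1 (by positivity)
      have h3 : ((2*nx+1:ℕ):ℝ)*t ≤ 5*(1-Real.log t)*t :=
        mul_le_mul_of_nonneg_right cbx ht0.le
      exact le_trans hAx (le_trans h2 h3)
    -- term B
    have tB : |1/Px - 2/Py| ≤ t := by
      rw [abs_of_nonneg (by linarith), htdef]; linarith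
    -- term C
    have tC : |f1 y - 2/Py| ≤ 5*(t*(1 - Real.log t)) := by
      set d : ℝ := 2/Py - y with hd
      set τ : ℝ := min t (2/Py) with hτ
      clear_value d τ
      have hd0 : 0 ≤ d := by rw [hd]; linarith
      have hdt : d ≤ t := by rw [hd, htdef]; linarith
      have hd1 : d ≤ 2/Py := by rw [hd]; linarith
      have hτ0 : 0 < τ := by rw [hτ]; exact lt_min ht0 (by positivity)
      have hτPy : τ ≤ 2/Py := by rw [hτ]; exact min_le_right _ _
      have hτt : τ ≤ t := by rw [hτ]; exact min_le_left _ _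
      have hdτ : d ≤ τ := by rw [hτ]; exact le_min hdt hd1
      have cby : ((2*ny+1 : ℕ) : ℝ) ≤ 5 * (1 - Real.log τ) := const_bound hny1 hτ0 (by rw [← hPy]; exact hτPy)
      have h1 : ((2*ny+1:ℕ):ℝ)*d ≤ ((2*ny+1:ℕ):ℝ)*τ :=
        mul_le_mul_of_nonneg_left hdτ (by positivity)
      have h2 : ((2*ny+1:ℕ):ℝ)*τ ≤ 5*(1-Real.log τ)*τ :=
        mul_le_mul_of_nonneg_right cby hτ0.le
      have h3 : τ*(1-Real.log τ) ≤ t*(1-Real.log t) := phi_mono hτ0 hτt ht1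
      have h4 : |f1 y - 2/Py| ≤ ((2*ny+1:ℕ):ℝ)*d := hBy
      have h5 : 5*(1-Real.log τ)*τ ≤ 5*(t*(1-Real.log t)) := by linarith
      exact le_trans h4 (le_trans h1 (le_trans h2 h5))
    have hsplit : |f1 x - f1 y| ≤ |f1 x - 1/Px| + |1/Px - 2/Py| + |2/Py - f1 y| := by
      calc |f1 x - f1 y| = |(f1 x - 1/Px) + ((1/Px - 2/Py) + (2/Py - f1 y))| := by ring_nf
        _ ≤ |f1 x - 1/Px| + |(1/Px - 2/Py) + (2/Py - f1 y)| := abs_add_le _ _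
        _ ≤ _ := by linarith [abs_add_le (1/Px - 2/Py) (2/Py - f1 y)]
    rw [abs_sub_comm (2/Py) (f1 y)] at hsplit
    have htL : t ≤ t * (1 - Real.log t) := by
      have h6 := mul_nonneg ht0.le (by linarith : (0:ℝ) ≤ -(Real.log t))
      nlinarith
    linarith

lemma f1_key0 {x : ℝ} (hx0 : 0 < x) (hx1 : x ≤ 1) :
    |f1 x - f1 0| ≤ 11 * x * (1 - Real.log x) := by
  have hf0 : f1 0 = 0 := by rw [f1, if_pos le_rfl]
  obtain ⟨hn1, hl, hu⟩ := nIdx_spec hx0 hx1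
  obtain ⟨_, _, hge, hle⟩ := f1_est hx0 hx1
  have hP0 : (0:ℝ) < (2:ℝ)^(nIdx x) := by positivity
  have h1 : f1 x ≤ 2*x := by
    have : 2/(2:ℝ)^(nIdx x) ≤ 2*x := by
      rw [div_le_iff₀ hP0]; nlinarith
    linarith
  have h2 : 0 ≤ f1 x := by
    have : 0 < 1/(2:ℝ)^(nIdx x) := by positivity
    linarith
  have hL : 1 ≤ 1 - Real.log x := by
    have := Real.log_nonpos hx0.le hx1
    linarith
  rw [hf0, sub_zero, abs_of_nonneg h2]
  have h3 : 11*x*1 ≤ 11*x*(1 - Real.log x) :=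
    mul_le_mul_of_nonneg_left hL (by positivity)
  linarith

/-- `f_1` has modulus of continuity `t·log(1/t)`:
`|f_1 x - f_1 y| ≤ C·|x-y|·log(e/|x-y|)`.  In particular `f_1` is `α`-Hölder
for every `α ∈ [0,1)`. -/
theorem f1_modulus_of_continuity :
    (∃ C > (0 : ℝ), ∀ x ∈ Set.Icc (0 : ℝ) 1, ∀ y ∈ Set.Icc (0 : ℝ) 1, x ≠ y →
      |f1 x - f1 y| ≤ C * |x - y| * Real.log (Real.exp 1 / |x - y|)) ∧
    ∀ α ∈ Set.Ico (0 : ℝ) 1, ∃ C > (0 : ℝ),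
      ∀ x ∈ Set.Icc (0 : ℝ) 1, ∀ y ∈ Set.Icc (0 : ℝ) 1,
        |f1 x - f1 y| ≤ C * |x - y| ^ α := by
  have main : ∀ x y : ℝ, 0 ≤ y → y < x → x ≤ 1 →
      |f1 x - f1 y| ≤ 11 * (x - y) * (1 - Real.log (x - y)) := by
    intro x y hy0 hyx hx1
    rcases eq_or_lt_of_le hy0 with h0 | h0
    · rw [← h0]
      simpa using f1_key0 (by linarith) hx1
    · exact f1_key h0 hyx hx1
  have habs : ∀ x ∈ Set.Icc (0:ℝ) 1, ∀ y ∈ Set.Icc (0:ℝ) 1, x ≠ y →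
      |f1 x - f1 y| ≤ 11 * |x - y| * (1 - Real.log |x - y|) := by
    intro x hx y hy hxy
    rcases lt_or_gt_of_ne hxy with h | h
    · rw [abs_sub_comm (f1 x), abs_sub_comm x y, abs_of_pos (by linarith : (0:ℝ) < y - x)]
      exact main y x hx.1 h hy.2
    · rw [abs_of_pos (by linarith : (0:ℝ) < x - y)]
      exact main x y hy.1 h hx.2
  constructor
  · refine ⟨11, by norm_num, ?_⟩
    intro x hx y hy hxy
    have h := habs x hx y hy hxy
    have ht0 : 0 < |x - y| := abs_pos.mpr (sub_ne_zero.mpr hxy)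
    have hlog : Real.log (Real.exp 1 / |x-y|) = 1 - Real.log |x-y| := by
      rw [Real.log_div (Real.exp_ne_zero 1) ht0.ne', Real.log_exp]
    rw [hlog]; exact h
  · rintro α ⟨hα0, hα1⟩
    have hα' : (0:ℝ) < 1 - α := by linarith
    refine ⟨11/(1-α), div_pos (by norm_num) hα', ?_⟩
    intro x hx y hy
    rcases eq_or_ne x y with he | hne
    · rw [he, sub_self, abs_zero]
      exact mul_nonneg (le_of_lt (div_pos (by norm_num) hα'))
        (Real.rpow_nonneg (abs_nonneg _) _)
    · have h := habs x hx y hy hne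
      set t := |x - y| with htd
      clear_value t
      have ht0 : 0 < t := by
        rw [htd]; exact abs_pos.mpr (sub_ne_zero.mpr hne)
      have ht1 : t ≤ 1 := by
        rw [htd]
        exact abs_le.mpr ⟨by linarith [hx.1, hy.2], by linarith [hx.2, hy.1]⟩
      have hts : t = t^α * t^(1-α) := by
        rw [← Real.rpow_add ht0, show α + (1-α) = 1 by ring, Real.rpow_one]
      have key2 : t^(1-α) * (1 - Real.log t) ≤ 1/(1-α) := by
        set s := -(Real.log t) with hs'
        have hs0 : 0 ≤ s := by rw [hs']; linarith [Real.log_nonpos ht0.le ht1]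
        have hrw : t^(1-α) = Real.exp (-((1-α)*s)) := by
          rw [Real.rpow_def_of_pos ht0, hs']; ring_nf
        have hexp : 1 + (1-α)*s ≤ Real.exp ((1-α)*s) := by
          linarith [Real.add_one_le_exp ((1-α)*s)]
        have hE0 : 0 < Real.exp ((1-α)*s) := Real.exp_pos _
        have h2 : (1-α)*(1+s) ≤ Real.exp ((1-α)*s) := by nlinarith
        rw [hrw, Real.exp_neg,
          show (1 - Real.log t) = 1 + s by rw [hs']; ring,
          show (Real.exp ((1-α)*s))⁻¹ * (1+s) = (1+s)/Real.exp ((1-α)*s) by ring,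
          div_le_div_iff₀ hE0 hα']
        nlinarith
      have h1 : (0:ℝ) < t^α := Real.rpow_pos_of_pos ht0 _
      have h2 : t^α*(t^(1-α)*(1-Real.log t)) ≤ t^α*(1/(1-α)) :=
        mul_le_mul_of_nonneg_left key2 h1.le
      have h3 : t^α*(t^(1-α)*(1-Real.log t)) = t*(1-Real.log t) := by
        rw [← mul_assoc, ← hts]
      have hfin : 11*t*(1-Real.log t) ≤ 11/(1-α)*t^α := by
        calc 11*t*(1-Real.log t) = 11*(t*(1-Real.log t)) := by ring
          _ ≤ 11*(t^α*(1/(1-α))) := by rw [← h3]; linarith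
          _ = 11/(1-α)*t^α := by ring
      linarith
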